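/- Fix r > 0 and ζ ∈ [0, 2π). Let w₁ := (1/√(1+r²))·(1, 0, r·cos ζ, r·sin ζ) and w₂ := (1/√(1+r²))·(0, 1, −r·sin ζ, r·cos ζ) in ℝ⁴, let W := Span{w₁, w₂}, and let Π_{W⊥} denote orthogonal projection of ℝ⁴ onto the orthogonal complement of W. Then for every (x⃗, y⃗) = (x₁, x₂, y₁, y₂) ∈ ℝ⁴, ‖Π_{W⊥}(x⃗, y⃗)‖² = (r²/(1+r²))·‖x⃗ − (1/r)·R_ζ(y⃗)‖², where R_ζ(y₁, y₂) := (y₁·cos ζ + y₂·sin ζ, −y₁·sin ζ + y₂·cos ζ). -/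

import Mathlib

open Metric Real

noncomputable section

/-- The point of `ℝ⁴` with coordinates `(a, b, c, d)`. -/
def pt4 (a b c d : ℝ) : EuclideanSpace ℝ (Fin 4) :=
  WithLp.toLp 2 (fun i : Fin 4 => if i = 0 then a else if i = 1 then b else if i = 2 then c else d)

/-- The point of `ℝ²` with coordinates `(a, b)`. -/
def pt2 (a b : ℝ) : EuclideanSpace ℝ (Fin 2) :=
  WithLp.toLp 2 (fun i : Fin 2 => if i = 0 then a else b)

/-- The vector `w₁ = (1/√(1+r²))·(1, 0, r cos ζ, r sin ζ)`. -/
def wvec₁ (r ζ : ℝ) : EuclideanSpace ℝ (Fin 4) :=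
  (Real.sqrt (1 + r ^ 2))⁻¹ • pt4 1 0 (r * Real.cos ζ) (r * Real.sin ζ)

/-- The vector `w₂ = (1/√(1+r²))·(0, 1, -r sin ζ, r cos ζ)`. -/
def wvec₂ (r ζ : ℝ) : EuclideanSpace ℝ (Fin 4) :=
  (Real.sqrt (1 + r ^ 2))⁻¹ • pt4 0 1 (-(r * Real.sin ζ)) (r * Real.cos ζ)

/-- The rotation `R_ζ(y₁, y₂) = (y₁ cos ζ + y₂ sin ζ, -y₁ sin ζ + y₂ cos ζ)` of `ℝ²`. -/
def rotPt (ζ y₁ y₂ : ℝ) : EuclideanSpace ℝ (Fin 2) :=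
  pt2 (y₁ * Real.cos ζ + y₂ * Real.sin ζ) (-(y₁ * Real.sin ζ) + y₂ * Real.cos ζ)

open Submodule
open scoped InnerProductSpace

/-! `w₁, w₂` are orthonormal, so by Pythagoras
`‖Π_{W⊥} v‖² = ‖v‖² - ⟪w₁, v⟫² - ⟪w₂, v⟫²`. Expanding the two inner products and using
`cos² ζ + sin² ζ = 1`, this is `‖r x⃗ - R_ζ y⃗‖² / (1 + r²)`, which is the right-hand side. -/

/-- `K` is a separate argument so that callers never have to transport the
`HasOrthogonalProjection` instance along a rewrite of the spanning set. -/
theorem Orthonormal.norm_sq_orthogonalProjectionOnto_orthogonal {𝕜 E ι : Type*} [RCLike 𝕜]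
    [NormedAddCommGroup E] [InnerProductSpace 𝕜 E] [Fintype ι] {v : ι → E}
    (hv : Orthonormal 𝕜 v) {K : Submodule 𝕜 E} [K.HasOrthogonalProjection]
    (hK : span 𝕜 (Set.range v) = K) (x : E) :
    ‖(Kᗮ.orthogonalProjectionOnto x : E)‖ ^ 2 = ‖x‖ ^ 2 - ∑ i, ‖⟪v i, x⟫_𝕜‖ ^ 2 := by
  subst hK
  have hb : ⇑(Module.Basis.span hv.linearIndependent) = fun i ↦ ⟨v i, subset_span ⟨i, rfl⟩⟩ :=
    funext (Module.Basis.span_apply _)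
  let b := (Module.Basis.span hv.linearIndependent).toOrthonormalBasis (hb ▸ orthonormal_span hv)
  have hbv (i : ι) : (b i : E) = v i := by simp [b]
  rw [Submodule.norm_coe, norm_sq_eq_add_norm_sq_projection x (span 𝕜 (Set.range v)),
    ← b.sum_sq_norm_inner_right (orthogonalProjectionOnto _ x)]
  simp only [inner_orthogonalProjectionOnto_eq_of_mem_left, hbv, add_sub_cancel_left]

section RealInnerProductSpace

variable {E : Type*} [NormedAddCommGroup E] [InnerProductSpace ℝ E]

lemma norm_sq_orthogonalProjectionOnto_orthogonal_span_pair {u v : E}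
    (hu : ‖u‖ = 1) (hv : ‖v‖ = 1) (huv : ⟪u, v⟫_ℝ = 0)
    [(span ℝ {u, v}).HasOrthogonalProjection] (x : E) :
    ‖((span ℝ {u, v})ᗮ.orthogonalProjectionOnto x : E)‖ ^ 2 =
      ‖x‖ ^ 2 - ⟪u, x⟫_ℝ ^ 2 - ⟪v, x⟫_ℝ ^ 2 := by
  have hon : Orthonormal ℝ ![u, v] := by simp [orthonormal_vecCons_iff, hu, hv, huv]
  rw [hon.norm_sq_orthogonalProjectionOnto_orthogonal (by rw [Matrix.range_cons_cons_empty]) x]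
  simp [Fin.sum_univ_two, sub_sub]

lemma norm_inv_sqrt_smul_eq_one {a : ℝ} (ha : 0 < a) {u : E} (hu : ‖u‖ ^ 2 = a) :
    ‖(√a)⁻¹ • u‖ = 1 := by
  have hu₀ : ‖u‖ ≠ 0 := by
    rintro h
    rw [h] at hu
    linarith
  rw [norm_smul, norm_inv, Real.norm_of_nonneg (Real.sqrt_nonneg a), ← hu,
    Real.sqrt_sq (norm_nonneg u), inv_mul_cancel₀ hu₀]

lemma sq_inner_inv_sqrt_smul_left {a : ℝ} (ha : 0 ≤ a) (u x : E) :
    ⟪(√a)⁻¹ • u, x⟫_ℝ ^ 2 = ⟪u, x⟫_ℝ ^ 2 / a := by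
  rw [real_inner_smul_left, mul_pow, inv_pow, Real.sq_sqrt ha, inv_mul_eq_div]

end RealInnerProductSpace

lemma inner_pt4 (a b c d a' b' c' d' : ℝ) :
    ⟪pt4 a b c d, pt4 a' b' c' d'⟫_ℝ = a * a' + b * b' + c * c' + d * d' := by
  simp [pt4, PiLp.inner_apply, Fin.sum_univ_four]
  ring

lemma norm_sq_pt4 (a b c d : ℝ) : ‖pt4 a b c d‖ ^ 2 = a ^ 2 + b ^ 2 + c ^ 2 + d ^ 2 := by
  rw [← real_inner_self_eq_norm_sq, inner_pt4]
  ring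

lemma norm_sq_pt2 (a b : ℝ) : ‖pt2 a b‖ ^ 2 = a ^ 2 + b ^ 2 := by
  simp [pt2, EuclideanSpace.norm_sq_eq, Fin.sum_univ_two]

lemma pt2_sub_smul_pt2 (a b c a' b' : ℝ) :
    pt2 a b - c • pt2 a' b' = pt2 (a - c * a') (b - c * b') := by
  ext i
  fin_cases i <;> simp [pt2]

lemma norm_wvec₁ (r ζ : ℝ) : ‖wvec₁ r ζ‖ = 1 :=
  norm_inv_sqrt_smul_eq_one (by positivity) <| by
    rw [norm_sq_pt4]
    linear_combination r ^ 2 * Real.cos_sq_add_sin_sq ζ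

lemma norm_wvec₂ (r ζ : ℝ) : ‖wvec₂ r ζ‖ = 1 :=
  norm_inv_sqrt_smul_eq_one (by positivity) <| by
    rw [norm_sq_pt4]
    linear_combination r ^ 2 * Real.sin_sq_add_cos_sq ζ

lemma inner_wvec₁_wvec₂ (r ζ : ℝ) : ⟪wvec₁ r ζ, wvec₂ r ζ⟫_ℝ = 0 := by
  rw [wvec₁, wvec₂, real_inner_smul_left, real_inner_smul_right, inner_pt4]
  ring

theorem statement16_general (r ζ : ℝ) (hr : 0 < r) :
    ∀ x₁ x₂ y₁ y₂ : ℝ,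
      ‖(Submodule.orthogonalProjectionOnto
          ((Submodule.span ℝ {wvec₁ r ζ, wvec₂ r ζ} :
            Submodule ℝ (EuclideanSpace ℝ (Fin 4))))ᗮ
          (pt4 x₁ x₂ y₁ y₂) : EuclideanSpace ℝ (Fin 4))‖ ^ 2 =
        r ^ 2 / (1 + r ^ 2) * ‖pt2 x₁ x₂ - r⁻¹ • rotPt ζ y₁ y₂‖ ^ 2 := by
  intro x₁ x₂ y₁ y₂
  have h1r : 0 ≤ 1 + r ^ 2 := by positivity
  rw [norm_sq_orthogonalProjectionOnto_orthogonal_span_pair (norm_wvec₁ r ζ) (norm_wvec₂ r ζ)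
      (inner_wvec₁_wvec₂ r ζ), wvec₁, wvec₂, sq_inner_inv_sqrt_smul_left h1r,
    sq_inner_inv_sqrt_smul_left h1r, inner_pt4, inner_pt4, norm_sq_pt4, rotPt, pt2_sub_smul_pt2,
    norm_sq_pt2]
  field_simp
  linear_combination -(1 + r ^ 2) * (y₁ ^ 2 + y₂ ^ 2) * Real.sin_sq_add_cos_sq ζ

/-- computation in the proof of Lemma A.2: the norm of the projection
onto the orthogonal complement of `W = Span{w₁, w₂}`. -/
theorem statement16 (r ζ : ℝ) (hr : 0 < r) (hζ₀ : 0 ≤ ζ) (hζ₁ : ζ < 2 * π) :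
    ∀ x₁ x₂ y₁ y₂ : ℝ,
      ‖(Submodule.orthogonalProjectionOnto
          ((Submodule.span ℝ {wvec₁ r ζ, wvec₂ r ζ} :
            Submodule ℝ (EuclideanSpace ℝ (Fin 4))))ᗮ
          (pt4 x₁ x₂ y₁ y₂) : EuclideanSpace ℝ (Fin 4))‖ ^ 2 =
        r ^ 2 / (1 + r ^ 2) * ‖pt2 x₁ x₂ - r⁻¹ • rotPt ζ y₁ y₂‖ ^ 2 :=
  statement16_general r ζ hr
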